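/- For the two-point distribution D on [0,1]×{0,1} putting probability 1/2 on (1/2 - ε, 1) and probability 1/2 on (1/2, 0), with 0 < ε ≤ 1/2, the smooth calibration error satisfies smCE(D) ≥ 3ε/4. -/

import Mathlib

/-!
Test against the tent `w t = max (-1) (1 - |t - (1/2 - ε)|)`: it is `1` at the atom
`1/2 - ε` and `1 - ε` at the atom `1/2`, so `E[(y - v) w(v)] = (1/2 + ε)/2 - (1 - ε)/4 = 3ε/4`.
Since `|w| ≤ 1`, every value in the set defining `smCE` is at most `E|y - v|`, so the supremum
dominates this value.
-/

open MeasureTheory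

noncomputable section

/-- The real value of a boolean outcome. -/
def yval (b : Bool) : ℝ := if b then 1 else 0

/-- `Π` is an extension of the prediction-outcome distribution `D`: it is a probability
distribution of triples `(u, v, y)` whose `(v, y)`-marginal is `D`, with `u ∈ [0,1]`,
and `(u, y)` perfectly calibrated, i.e. `E[y | u] = u` (equivalently,
`E[(y - u) 1_{u ∈ S}] = 0` for every measurable `S`). -/
def IsExtension (D : Measure (ℝ × Bool)) (π : Measure (ℝ × (ℝ × Bool))) : Prop :=
  IsProbabilityMeasure π ∧
  π.map Prod.snd = D ∧
  (∀ᵐ p ∂π, p.1 ∈ Set.Icc (0 : ℝ) 1) ∧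
  ∀ S : Set ℝ, MeasurableSet S →
    (∫ p in {p : ℝ × (ℝ × Bool) | p.1 ∈ S}, yval p.2.2 ∂π) =
      ∫ p in {p : ℝ × (ℝ × Bool) | p.1 ∈ S}, p.1 ∂π

/-- The lower distance to calibration of a distribution `D` on `[0,1] × {0,1}`. -/
def dCE (D : Measure (ℝ × Bool)) : ℝ :=
  sInf {r : ℝ | ∃ π : Measure (ℝ × (ℝ × Bool)), IsExtension D π ∧
    r = ∫ p, |p.1 - p.2.1| ∂π}

/-- The smooth calibration error of a distribution `D` on `[0,1] × {0,1}`: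
the supremum over `1`-Lipschitz weight functions `w : [0,1] → [-1,1]` of
`|E[(y - v) w(v)]|`. -/
def smCE (D : Measure (ℝ × Bool)) : ℝ :=
  sSup {r : ℝ | ∃ w : ℝ → ℝ, LipschitzWith 1 w ∧ (∀ t : ℝ, w t ∈ Set.Icc (-1 : ℝ) 1) ∧
    r = |∫ p, (yval p.2 - p.1) * w p.1 ∂D|}

/-- The two-point distribution putting probability `1/2` on `(1/2 - ε, 1)` and
probability `1/2` on `(1/2, 0)`. -/
def twoPoint (ε : ℝ) : Measure (ℝ × Bool) :=
  ENNReal.ofReal (1 / 2) • Measure.dirac (1 / 2 - ε, true) +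
    ENNReal.ofReal (1 / 2) • Measure.dirac (1 / 2, false)

lemma integrable_twoPoint (ε : ℝ) (f : ℝ × Bool → ℝ) : Integrable f (twoPoint ε) :=
  ((integrable_dirac enorm_lt_top).smul_measure ENNReal.ofReal_ne_top).add_measure
    ((integrable_dirac enorm_lt_top).smul_measure ENNReal.ofReal_ne_top)

lemma integral_twoPoint (ε : ℝ) (f : ℝ × Bool → ℝ) :
    ∫ p, f p ∂twoPoint ε = (f (1 / 2 - ε, true) + f (1 / 2, false)) / 2 := by
  rw [twoPoint, integral_add_measure, integral_smul_measure, integral_smul_measure,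
    integral_dirac, integral_dirac, ENNReal.toReal_ofReal (by norm_num)]
  · simp only [smul_eq_mul]
    ring
  all_goals exact (integrable_dirac enorm_lt_top).smul_measure ENNReal.ofReal_ne_top

lemma abs_integral_le_smCE {D : Measure (ℝ × Bool)} (hD : Integrable (fun p : ℝ × Bool ↦ yval p.2 - p.1) D)
    {w : ℝ → ℝ} (hw : LipschitzWith 1 w) (hw_mem : ∀ t, w t ∈ Set.Icc (-1 : ℝ) 1) :
    |∫ p, (yval p.2 - p.1) * w p.1 ∂D| ≤ smCE D := by
  refine le_csSup ⟨∫ p, |yval p.2 - p.1| ∂D, ?_⟩ ⟨w, hw, hw_mem, rfl⟩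
  rintro _ ⟨v, -, hv_mem, rfl⟩
  refine abs_integral_le_integral_abs.trans
    (integral_mono_of_nonneg (.of_forall fun _ ↦ abs_nonneg _) hD.abs (.of_forall fun p ↦ ?_))
  dsimp only
  rw [abs_mul]
  exact mul_le_of_le_one_right (abs_nonneg _) (abs_le.2 (hv_mem p.1))

section Tent

variable {α : Type*} [PseudoMetricSpace α]

def tent (a t : α) : ℝ := max (-1) (1 - dist t a)

lemma lipschitzWith_tent (a : α) : LipschitzWith 1 (tent a) := by
  have h := ((IsometryEquiv.subLeft (1 : ℝ)).isometry.lipschitz.comp (.dist_left a)).const_max (-1)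
  rw [mul_one] at h
  exact h

lemma tent_mem_Icc (a t : α) : tent a t ∈ Set.Icc (-1 : ℝ) 1 :=
  ⟨le_max_left _ _, max_le (by norm_num) (by linarith [dist_nonneg (x := t) (y := a)])⟩

lemma tent_of_dist_le {a t : α} (h : dist t a ≤ 2) : tent a t = 1 - dist t a :=
  max_eq_right (by linarith)

end Tent

theorem stmt4 (ε : ℝ) (h0 : 0 < ε) (h1 : ε ≤ 1 / 2) :
    3 * ε / 4 ≤ smCE (twoPoint ε) := by
  have hpeak : tent (1 / 2 - ε) (1 / 2 - ε) = 1 := by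
    simp [tent]
  have hshoulder : tent (1 / 2 - ε) (1 / 2) = 1 - ε := by
    have hdist : dist (1 / 2 : ℝ) (1 / 2 - ε) = ε := by
      rw [Real.dist_eq, sub_sub_cancel, abs_of_pos h0]
    rw [tent_of_dist_le (by linarith), hdist]
  have hvalue : ∫ p, (yval p.2 - p.1) * tent (1 / 2 - ε) p.1 ∂twoPoint ε = 3 * ε / 4 := by
    rw [integral_twoPoint, hpeak, hshoulder]
    norm_num [yval]
    ring
  calc 3 * ε / 4 ≤ |∫ p, (yval p.2 - p.1) * tent (1 / 2 - ε) p.1 ∂twoPoint ε| :=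
        hvalue ▸ le_abs_self _
    _ ≤ smCE (twoPoint ε) :=
        abs_integral_le_smCE (integrable_twoPoint ε _) (lipschitzWith_tent _) (tent_mem_Icc _)

end
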